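/- Let s, t > 1 be odd integers with gcd(s, t) = 1 and set n = s * t. Then the number of ordered pairs ((k, ℓ), (k', ℓ')) of elements of ZMod s × ZMod t with (k, ℓ) ≠ (k', ℓ') such that the graph D_{k,ℓ} ⊔ D_{k',ℓ'} contains a Hamiltonian path equals n * φ(n). (Thus the lower bound on the number of perfect pairs obtained from the product construction coincides with the bound n·φ(n)/2 obtained from the direct construction: the two lower bounds of Wagner are equivalent.) -/

import Mathlib

/-
Through the Chinese remainder theorem `ZMod s × ZMod t ≅ ZMod n`, the graph `D_p ⊔ D_q` becomes
the graph on `ZMod n` joining `x ≠ y` whenever `x + y ∈ {a, b}`. It has a Hamiltonian path iff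
`b - a` is a unit. Translating by half of `-a` (n is odd) reduces to `{a, b} = {0, d}`. If `d` is
a unit, scaling by `d⁻¹` reduces further to `{0, 1}`, where `0, 1, -1, 2, -2, …` is a Hamiltonian
path; otherwise the proper ideal `(d)` is closed under adjacency. Hence the pairs are counted by
`(a, b - a) ∈ ZMod n × (ZMod n)ˣ`.
-/


/-- For `s, t ≥ 1`, `k : ZMod s`, `ℓ : ZMod t`, the graph `D k ℓ` on vertex set
`ZMod s × ZMod t` in which distinct vertices `(i, j)` and `(i', j')` are
adjacent iff `i + i' = k` and `j + j' = ℓ`. -/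
def D (s t : ℕ) (k : ZMod s) (ℓ : ZMod t) : SimpleGraph (ZMod s × ZMod t) where
  Adj x y := x ≠ y ∧ x.1 + y.1 = k ∧ x.2 + y.2 = ℓ
  symm := ⟨fun x y ⟨h1, h2, h3⟩ =>
    ⟨h1.symm, by rwa [add_comm], by rwa [add_comm]⟩⟩
  loopless := ⟨fun x ⟨h, _⟩ => h rfl⟩

/-- A graph has a Hamiltonian path if some walk in it is a Hamiltonian path. -/
def HasHamiltonianPath {V : Type*} [DecidableEq V] (G : SimpleGraph V) : Prop :=
  ∃ (a b : V) (p : G.Walk a b), p.IsHamiltonian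

open SimpleGraph Function

theorem SimpleGraph.Reachable.mem_of_adj_mem {V : Type*} {G : SimpleGraph V} {S : Set V}
    (hS : ∀ x y, G.Adj x y → x ∈ S → y ∈ S) {u v : V} (h : G.Reachable u v) (hu : u ∈ S) :
    v ∈ S := by
  obtain ⟨p⟩ := h
  induction p with
  | nil => exact hu
  | cons hadj _ ih => exact ih (hS _ _ hadj hu)

variable {V W : Type*} [DecidableEq V] [DecidableEq W] {G : SimpleGraph V} {H : SimpleGraph W}

theorem SimpleGraph.Iso.hasHamiltonianPath_iff (e : G ≃g H) :
    HasHamiltonianPath G ↔ HasHamiltonianPath H := by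
  refine ⟨fun ⟨a, b, p, hp⟩ => ?_, fun ⟨a, b, p, hp⟩ => ?_⟩
  · exact ⟨e a, e b, p.map e.toHom, hp.map e.toHom e.bijective⟩
  · exact ⟨e.symm a, e.symm b, p.map e.symm.toHom, hp.map e.symm.toHom e.symm.bijective⟩

theorem HasHamiltonianPath.preconnected (h : HasHamiltonianPath G) : G.Preconnected := by
  obtain ⟨a, b, p, hp⟩ := h
  intro u v
  exact (p.takeUntil u (hp.mem_support u)).reverse.reachable.trans
    (p.takeUntil v (hp.mem_support v)).reachable

theorem hasHamiltonianPath_of_isChain [Fintype V] {l : List V} (hne : l ≠ [])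
    (hchain : l.IsChain G.Adj) (hnodup : l.Nodup) (hlen : l.length = Fintype.card V) :
    HasHamiltonianPath G := by
  refine ⟨_, _, Walk.ofSupport l hne hchain, Walk.isHamiltonian_iff_isPath_and_length_eq.mpr
    ⟨Walk.IsPath.mk' ?_, ?_⟩⟩
  · rwa [Walk.support_ofSupport]
  · rw [Walk.length_ofSupport, hlen]

/-- The graph of the involution `x ↦ a - x`, with its fixed points removed. -/
def sumGraph {A : Type*} [AddCommMagma A] (a : A) : SimpleGraph A where
  Adj x y := x ≠ y ∧ x + y = a
  symm := ⟨fun x y ⟨hne, hsum⟩ => ⟨hne.symm, by rwa [add_comm]⟩⟩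
  loopless := ⟨fun _ ⟨h, _⟩ => h rfl⟩

section sumGraph

variable {A B : Type*}

theorem sumGraph_sup_adj [AddCommMagma A] {a b x y : A} :
    (sumGraph a ⊔ sumGraph b).Adj x y ↔ x ≠ y ∧ (x + y = a ∨ x + y = b) := by
  simp only [sup_adj, sumGraph]
  tauto

theorem D_eq_sumGraph (s t : ℕ) (k : ZMod s) (ℓ : ZMod t) : D s t k ℓ = sumGraph (k, ℓ) := by
  ext x y
  simp [D, sumGraph, Prod.ext_iff]

def sumGraphSupIso [AddCommMagma A] [AddCommMagma B] (f : A ≃ B) {g : A → B} (hg : Injective g)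
    (hfg : ∀ x y, f x + f y = g (x + y)) (a b : A) :
    sumGraph a ⊔ sumGraph b ≃g sumGraph (g a) ⊔ sumGraph (g b) where
  toEquiv := f
  map_rel_iff' := by
    intro x y
    simp only [sumGraph_sup_adj, hfg, hg.eq_iff, f.injective.ne_iff]

variable [DecidableEq A]

theorem hasHamiltonianPath_sumGraph_sup_add_add [AddCommGroup A] (a b c : A) :
    HasHamiltonianPath (sumGraph a ⊔ sumGraph b) ↔
      HasHamiltonianPath (sumGraph (a + (c + c)) ⊔ sumGraph (b + (c + c))) :=
  (sumGraphSupIso (Equiv.addRight c) (add_left_injective (c + c))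
    (fun x y => by simp only [Equiv.coe_addRight]; abel) a b).hasHamiltonianPath_iff

theorem hasHamiltonianPath_sumGraph_sup_mul [CommRing A] (u : Aˣ) (a b : A) :
    HasHamiltonianPath (sumGraph a ⊔ sumGraph b) ↔
      HasHamiltonianPath (sumGraph (u * a) ⊔ sumGraph (u * b)) :=
  (sumGraphSupIso (Units.mulLeft u) u.isUnit.mul_right_injective
    (fun _ _ => (mul_add _ _ _).symm) a b).hasHamiltonianPath_iff

/-- The ideal generated by `d` is closed under the adjacency of `sumGraph 0 ⊔ sumGraph d`, so it
contains every vertex reachable from `0`. -/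
theorem isUnit_of_hasHamiltonianPath_sumGraph_zero_sup [CommRing A] {d : A}
    (h : HasHamiltonianPath (sumGraph 0 ⊔ sumGraph d)) : IsUnit d := by
  have hclosed : ∀ x y, (sumGraph 0 ⊔ sumGraph d).Adj x y →
      x ∈ Ideal.span {d} → y ∈ Ideal.span {d} := by
    intro x y hxy hx
    obtain ⟨-, hsum | hsum⟩ := sumGraph_sup_adj.mp hxy
    · rw [eq_neg_of_add_eq_zero_right hsum]
      exact neg_mem hx
    · rw [eq_sub_of_add_eq' hsum]
      exact sub_mem (Ideal.mem_span_singleton_self d) hx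
  have hone : (1 : A) ∈ Ideal.span {d} :=
    (h.preconnected 0 1).mem_of_adj_mem hclosed (Ideal.zero_mem _)
  exact Ideal.span_singleton_eq_top.mp ((Ideal.eq_top_iff_one _).mpr hone)

end sumGraph

/-- The enumeration `0, 1, -1, 2, -2, …` of `ℤ`; consecutive terms sum alternately to `1`
and `0`. -/
def zigzag (j : ℕ) : ℤ := if j % 2 = 0 then -(j / 2 : ℕ) else (j / 2 + 1 : ℕ)

theorem zigzag_add_succ (j : ℕ) :
    zigzag j + zigzag (j + 1) = 0 ∨ zigzag j + zigzag (j + 1) = 1 := by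
  unfold zigzag; split_ifs <;> omega

theorem ZMod.injOn_zigzag {n : ℕ} (hn : Odd n) :
    Set.InjOn (fun j => (zigzag j : ZMod n)) (Set.Iio n) := by
  intro i hi j hj h
  rw [Set.mem_Iio] at hi hj
  rw [ZMod.intCast_eq_intCast_iff_dvd_sub] at h
  obtain ⟨k, rfl⟩ := hn
  -- on `[0, 2k + 1)` the values of `zigzag` lie in `[-k, k]`
  have := Int.eq_zero_of_abs_lt_dvd h (by unfold zigzag; rw [abs_lt]; split_ifs <;> omega)
  unfold zigzag at this; split_ifs at this <;> omega

theorem ZMod.hasHamiltonianPath_sumGraph_zero_sup_one {n : ℕ} (hn : Odd n) :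
    HasHamiltonianPath (sumGraph (0 : ZMod n) ⊔ sumGraph 1) := by
  have : NeZero n := ⟨hn.pos.ne'⟩
  have hinj := ZMod.injOn_zigzag hn
  refine hasHamiltonianPath_of_isChain (l := (List.range n).map fun j => (zigzag j : ZMod n))
    (by simpa using hn.pos.ne') ?_ ?_ (by simp)
  · rw [List.isChain_map, List.isChain_range]
    intro j hj
    refine sumGraph_sup_adj.mpr
      ⟨fun h => by simpa using hinj (by simp; omega) (by simp; omega) h, ?_⟩
    rcases zigzag_add_succ j with h | h
    · left; exact_mod_cast congrArg (Int.cast : ℤ → ZMod n) h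
    · right; exact_mod_cast congrArg (Int.cast : ℤ → ZMod n) h
  · exact List.nodup_range.map_on fun i hi j hj =>
      hinj (Set.mem_Iio.mpr (List.mem_range.mp hi)) (Set.mem_Iio.mpr (List.mem_range.mp hj))

theorem ZMod.hasHamiltonianPath_sumGraph_sup_iff {n : ℕ} (hn : Odd n) (a b : ZMod n) :
    HasHamiltonianPath (sumGraph a ⊔ sumGraph b) ↔ IsUnit (b - a) := by
  obtain ⟨c, hc⟩ : ∃ c : ZMod n, c + c = -a :=
    ⟨(2 : ZMod n)⁻¹ * -a, by
      rw [← two_mul, ← mul_assoc, ← Nat.cast_ofNat, ZMod.coe_mul_inv_eq_one 2 hn.coprime_two_left,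
        one_mul]⟩
  rw [hasHamiltonianPath_sumGraph_sup_add_add a b c, hc, add_neg_cancel, ← sub_eq_add_neg]
  refine ⟨isUnit_of_hasHamiltonianPath_sumGraph_zero_sup, fun ⟨u, hu⟩ => ?_⟩
  simpa only [mul_zero, mul_one, hu] using (hasHamiltonianPath_sumGraph_sup_mul u 0 1).mp
    (ZMod.hasHamiltonianPath_sumGraph_zero_sup_one hn)

theorem card_subtype_isUnit_sub (R : Type*) [Ring R] :
    Nat.card {p : R × R // IsUnit (p.2 - p.1)} = Nat.card R * Nat.card Rˣ := by
  rw [← Nat.card_prod]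
  exact Nat.card_congr
    { toFun := fun p => (p.1.1, p.2.unit)
      invFun := fun x => ⟨(x.1, x.1 + x.2), by simp⟩
      left_inv := fun p => by ext <;> simp
      right_inv := fun x => by ext <;> simp }

theorem stmt_15_general (s t : ℕ) (hs : 1 < s)
    (hsodd : Odd s) (htodd : Odd t) (hco : Nat.Coprime s t)
    (n : ℕ) (hn : n = s * t) :
    Nat.card {q : (ZMod s × ZMod t) × (ZMod s × ZMod t) //
        q.1 ≠ q.2 ∧ HasHamiltonianPath (D s t q.1.1 q.1.2 ⊔ D s t q.2.1 q.2.2)} =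
      n * Nat.totient n := by
  subst hn
  have : Fact (1 < s * t) := ⟨one_lt_mul_of_lt_of_le hs htodd.pos⟩
  let e := (ZMod.chineseRemainder hco).symm
  have hiff : ∀ p q : ZMod s × ZMod t,
      (p ≠ q ∧ HasHamiltonianPath (D s t p.1 p.2 ⊔ D s t q.1 q.2)) ↔ IsUnit (e q - e p) := by
    intro p q
    rw [D_eq_sumGraph, D_eq_sumGraph, (sumGraphSupIso e.toEquiv e.injective
      (fun x y => (map_add e x y).symm) p q).hasHamiltonianPath_iff,
      ZMod.hasHamiltonianPath_sumGraph_sup_iff (hsodd.mul htodd)]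
    exact ⟨And.right, fun h => ⟨fun hpq => h.ne_zero (by rw [hpq, sub_self]), h⟩⟩
  rw [Nat.card_congr ((e.toEquiv.prodCongr e.toEquiv).subtypeEquiv
      (q := fun p => IsUnit (p.2 - p.1)) fun q => hiff q.1 q.2), card_subtype_isUnit_sub,
    Nat.card_zmod, Nat.card_eq_fintype_card, ZMod.card_units_eq_totient]

theorem stmt_15 (s t : ℕ) (hs : 1 < s) (ht : 1 < t)
    (hsodd : Odd s) (htodd : Odd t) (hco : Nat.Coprime s t)
    (n : ℕ) (hn : n = s * t) :
    Nat.card {q : (ZMod s × ZMod t) × (ZMod s × ZMod t) //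
        q.1 ≠ q.2 ∧ HasHamiltonianPath (D s t q.1.1 q.1.2 ⊔ D s t q.2.1 q.2.2)} =
      n * Nat.totient n :=
  stmt_15_general s t hs hsodd htodd hco n hn
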